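/- arXiv:2009.12074 — 8 statements merged into one kernel-verified Lean document; each statement's English description precedes it below -/
import Mathlib

section
/- Let X be a completely regular Hausdorff space and T : C_b(X) → C_b(X) a unital algebra homomorphism that is continuous with respect to the mixed (strict) topology. Then there exists a unique continuous map ψ : X → X such that T f = f ∘ ψ for all f ∈ C_b(X). -/
open BoundedContinuousFunction

/-- A bounded function vanishing at infinity (the functions inducing the seminorms
`p_g(f) = ‖f·g‖_∞` of the mixed (strict) topology). -/
def VanishesAtInfinity {X : Type*} [TopologicalSpace X] (g : X → ℂ) : Prop :=
  (∃ C : ℝ, ∀ x, ‖g x‖ ≤ C) ∧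
    ∀ ε > (0 : ℝ), ∃ K : Set X, IsCompact K ∧ ∀ x ∉ K, ‖g x‖ ≤ ε

/-!
For each `x`, the functional `f ↦ (T f) x` is a character of `C_b(X)` dominated by a single
seminorm `p_g` (feed the indicator of `{x}` to the continuity hypothesis). Such a character is a
point evaluation: pick a compact `K` off which `‖g‖ ≤ 1/2`. If its kernel had no common zero on
`K`, then by compactness the kernel would contain `u` with `u = 1` on `K` and `‖1 - u‖ ≤ 1`,
whence `1 = ‖φ (1 - u)‖ ≤ p_g (1 - u) ≤ 1/2`. The point map `ψ` so obtained is continuous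
because `X` carries the initial topology of `C_b(X)`, and it is unique because `C_b(X)`
separates points.
-/

open Set
open scoped ComplexOrder

lemma iSup_norm_mul_le_of_eqOn_zero {α : Type*} {f g : α → ℂ} {K : Set α} {ε : ℝ} (hε : 0 ≤ ε)
    (hfK : EqOn f 0 K) (hf : ∀ x, ‖f x‖ ≤ 1) (hg : ∀ x ∉ K, ‖g x‖ ≤ ε) :
    ⨆ x, ‖f x * g x‖ ≤ ε := by
  refine Real.iSup_le (fun x => ?_) hε
  by_cases hx : x ∈ K
  · simpa [hfK hx] using hε
  · rw [norm_mul]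
    simpa using mul_le_mul (hf x) (hg x hx) (norm_nonneg _) zero_le_one

section

variable {X : Type*} [TopologicalSpace X]

lemma vanishesAtInfinity_indicator_one {K : Set X} (hK : IsCompact K) :
    VanishesAtInfinity (K.indicator 1) := by
  refine ⟨⟨1, fun x => ?_⟩, fun ε hε => ⟨K, hK, fun x hx => ?_⟩⟩
  · by_cases hx : x ∈ K <;> simp [hx]
  · simpa [indicator_of_notMem hx] using hε.le

lemma VanishesAtInfinity.const_mul {g : X → ℂ} (hg : VanishesAtInfinity g) (c : ℂ) :
    VanishesAtInfinity fun x => c * g x := by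
  obtain ⟨⟨C, hC⟩, hvan⟩ := hg
  refine ⟨⟨‖c‖ * C, fun x => ?_⟩, fun ε hε => ?_⟩
  · rw [norm_mul]
    exact mul_le_mul_of_nonneg_left (hC x) (norm_nonneg c)
  · obtain ⟨K, hK, hKg⟩ := hvan (ε / (‖c‖ + 1)) (by positivity)
    refine ⟨K, hK, fun x hx => ?_⟩
    calc ‖c * g x‖ = ‖c‖ * ‖g x‖ := norm_mul _ _
      _ ≤ (‖c‖ + 1) * (ε / (‖c‖ + 1)) := by gcongr <;> linarith [hKg x hx]
      _ = ε := by field_simp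

lemma norm_mul_le_iSup_norm_mul (f : X →ᵇ ℂ) {g : X → ℂ} (hg : ∃ C, ∀ x, ‖g x‖ ≤ C) (x : X) :
    ‖f x * g x‖ ≤ ⨆ y, ‖f y * g y‖ := by
  obtain ⟨C, hC⟩ := hg
  refine le_ciSup (f := fun y => ‖f y * g y‖) ⟨‖f‖ * C, ?_⟩ x
  rintro _ ⟨y, rfl⟩
  exact (norm_mul_le _ _).trans <|
    mul_le_mul (f.norm_coe_le_norm y) (hC y) (norm_nonneg _) (norm_nonneg _)

lemma CompletelyRegularSpace.exists_bcf_eq_zero_eqOn_one [CompletelyRegularSpace X] {x : X}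
    {K : Set X} (hK : IsClosed K) (hx : x ∉ K) : ∃ f : X →ᵇ ℂ, f x = 0 ∧ EqOn f 1 K := by
  obtain ⟨f, hf, hfx, hfK⟩ := CompletelyRegularSpace.completely_regular x K hK hx
  refine ⟨ofNormedAddCommGroup (fun y => ((f y : ℝ) : ℂ)) (by fun_prop) 1 fun y => ?_,
    by simp [hfx], fun y hy => by simp [hfK hy]⟩
  rw [Complex.norm_real, Real.norm_of_nonneg (f y).2.1]
  exact (f y).2.2

lemma eq_of_forall_bcf_apply_eq [CompletelyRegularSpace X] [T1Space X] {x y : X}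
    (h : ∀ f : X →ᵇ ℂ, f x = f y) : x = y := by
  by_contra hxy
  obtain ⟨f, hfx, hfy⟩ := CompletelyRegularSpace.exists_bcf_eq_zero_eqOn_one isClosed_singleton
    (mem_singleton_iff.not.2 hxy)
  simpa [hfx, hfy rfl] using h f

lemma continuous_of_forall_continuous_bcf_comp [CompletelyRegularSpace X] {Y : Type*}
    [TopologicalSpace Y] {ψ : Y → X} (h : ∀ f : X →ᵇ ℂ, Continuous (f ∘ ψ)) : Continuous ψ := by
  refine continuous_iff_continuousAt.2 fun y => (nhds_basis_opens (ψ y)).tendsto_right_iff.2 ?_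
  rintro V ⟨hψV, hV⟩
  obtain ⟨f, hf0, hf1⟩ :=
    CompletelyRegularSpace.exists_bcf_eq_zero_eqOn_one hV.isClosed_compl (not_not.2 hψV)
  have hopen : IsOpen {y' | ‖f (ψ y')‖ < 1} := isOpen_lt (h f).norm continuous_const
  filter_upwards [hopen.mem_nhds (by simp [hf0])] with y' hy'
  by_contra hV'
  simp [hf1 hV'] at hy'

lemma exists_nonneg_mem_pos_on_of_isCompact (I : Ideal (X →ᵇ ℂ)) {K : Set X} (hK : IsCompact K)
    (hI : ∀ z ∈ K, ∃ f ∈ I, f z ≠ 0) : ∃ h ∈ I, (∀ x, 0 ≤ h x) ∧ ∀ x ∈ K, 0 < h x := by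
  choose F hFI hF0 using fun z : K => hI z z.2
  obtain ⟨t, ht⟩ := hK.elim_finite_subcover (fun z => {x | F z x ≠ 0})
    (fun z => isOpen_ne_fun (F z).continuous continuous_const)
    fun x hx => mem_iUnion.2 ⟨⟨x, hx⟩, hF0 ⟨x, hx⟩⟩
  refine ⟨∑ z ∈ t, star (F z) * F z,
    I.sum_mem fun z _ => I.mul_mem_left _ (hFI z), fun x => ?_, fun x hx => ?_⟩
  · simpa using Finset.sum_nonneg fun z _ => star_mul_self_nonneg (F z x)
  · obtain ⟨z, hzt, hzx⟩ := mem_iUnion₂.1 (ht hx)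
    simpa using Finset.sum_pos' (fun z _ => star_mul_self_nonneg (F z x))
      ⟨z, hzt, star_mul_self_pos (IsRegular.of_ne_zero hzx)⟩

lemma exists_mul_eqOn_one_of_nonneg {h : X →ᵇ ℂ} (h0 : ∀ x, 0 ≤ h x) {K : Set X}
    (hK : IsCompact K) (hpos : ∀ x ∈ K, 0 < h x) :
    ∃ w : X →ᵇ ℂ, EqOn (h * w) 1 K ∧ ∀ x, ‖1 - h x * w x‖ ≤ 1 := by
  set H : X → ℝ := fun x => (h x).re
  have hH : ∀ x, h x = H x := fun x => Complex.eq_re_of_ofReal_le (r := 0) (by simpa using h0 x)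
  have hHcont : Continuous H := Complex.continuous_re.comp h.continuous
  obtain ⟨δ, hδ, hδK⟩ := hK.exists_forall_le' hHcont.continuousOn
    fun x hx => by simpa [hH x] using hpos x hx
  have hmax : ∀ x, 0 < max (H x) δ := fun x => hδ.trans_le (le_max_right _ _)
  let w : X →ᵇ ℂ := ofNormedAddCommGroup (fun x => (((max (H x) δ)⁻¹ : ℝ) : ℂ))
    (by fun_prop (disch := exact fun x => (hmax x).ne')) δ⁻¹ fun x => by
      rw [Complex.norm_real, Real.norm_of_nonneg (inv_pos.2 (hmax x)).le]
      exact inv_anti₀ hδ (le_max_right _ _)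
  have hhw : ∀ x, h x * w x = ((H x / max (H x) δ : ℝ) : ℂ) := fun x => by
    simp [w, hH x, div_eq_mul_inv]
  refine ⟨w, fun x hx => ?_, fun x => ?_⟩
  · have hHx : 0 < H x := hδ.trans_le (hδK x hx)
    simp [hhw x, max_eq_left (hδK x hx), hHx.ne']
  · have hle : H x / max (H x) δ ≤ 1 := div_le_one_of_le₀ (le_max_left _ _) (hmax x).le
    have hnn : 0 ≤ H x / max (H x) δ := div_nonneg (by simpa [hH x] using h0 x) (hmax x).le
    rw [hhw x, ← Complex.ofReal_one, ← Complex.ofReal_sub, Complex.norm_real,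
      Real.norm_of_nonneg (by linarith)]
    linarith

lemma exists_mem_eqOn_one_of_isCompact (I : Ideal (X →ᵇ ℂ)) {K : Set X} (hK : IsCompact K)
    (hI : ∀ z ∈ K, ∃ f ∈ I, f z ≠ 0) : ∃ u ∈ I, EqOn u 1 K ∧ ∀ x, ‖1 - u x‖ ≤ 1 := by
  obtain ⟨h, hI, h0, hpos⟩ := exists_nonneg_mem_pos_on_of_isCompact I hK hI
  obtain ⟨w, hwK, hw⟩ := exists_mul_eqOn_one_of_nonneg h0 hK hpos
  exact ⟨h * w, I.mul_mem_right w hI, hwK, hw⟩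

theorem exists_eq_eval_of_norm_le_iSup_norm_mul (φ : (X →ᵇ ℂ) →ₐ[ℂ] ℂ) {g : X → ℂ}
    (hg : VanishesAtInfinity g) (hφ : ∀ f, ‖φ f‖ ≤ ⨆ x, ‖f x * g x‖) :
    ∃ z, ∀ f, φ f = f z := by
  obtain ⟨K, hK, hKg⟩ := hg.2 (1 / 2) (by norm_num)
  by_contra! hno
  have hker : ∀ z ∈ K, ∃ f ∈ RingHom.ker φ, f z ≠ 0 := fun z _ => by
    obtain ⟨f, hf⟩ := hno z
    refine ⟨f - algebraMap ℂ _ (φ f), by simp [RingHom.mem_ker], fun hz => hf ?_⟩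
    exact (sub_eq_zero.1 (by simpa using hz)).symm
  obtain ⟨u, hu, huK, hu1⟩ := exists_mem_eqOn_one_of_isCompact _ hK hker
  have hφu : φ (1 - u) = 1 := by simp [(RingHom.mem_ker).1 hu]
  have := (hφ (1 - u)).trans <| iSup_norm_mul_le_of_eqOn_zero (by norm_num)
    (fun x hx => by simp [huK hx]) (fun x => by simpa using hu1 x) hKg
  norm_num [hφu] at this

end

/-- Every unital algebra homomorphism `T : C_b(X) → C_b(X)` that is continuous with
respect to the mixed (strict) topology (expressed through domination of the defining
seminorms `p_g`) is the Koopman operator of a unique continuous map `ψ : X → X`. -/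
theorem mixed_continuous_unital_algebra_hom_is_koopman
    {X : Type*} [TopologicalSpace X] [CompletelyRegularSpace X] [T2Space X]
    (T : (X →ᵇ ℂ) →ₗ[ℂ] (X →ᵇ ℂ))
    (hmul : ∀ f g : X →ᵇ ℂ, T (f * g) = T f * T g)
    (hone : T 1 = 1)
    (hcont : ∀ g : X → ℂ, VanishesAtInfinity g →
      ∃ g' : X → ℂ, VanishesAtInfinity g' ∧ ∃ C > (0 : ℝ),
        ∀ f : X →ᵇ ℂ, (⨆ x, ‖(T f) x * g x‖) ≤ C * ⨆ x, ‖f x * g' x‖) :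
    ∃! ψ : C(X, X), ∀ f : X →ᵇ ℂ, T f = f.compContinuous ψ := by
  have hpoint : ∀ x, ∃ z, ∀ f, T f x = f z := fun x => by
    let φ : (X →ᵇ ℂ) →ₐ[ℂ] ℂ :=
      AlgHom.ofLinearMap ((evalCLM ℂ x).toLinearMap ∘ₗ T) (by simp [hone]) (by simp [hmul])
    have hx := vanishesAtInfinity_indicator_one (isCompact_singleton (x := x))
    obtain ⟨g', hg', C, hC, hT⟩ := hcont _ hx
    refine exists_eq_eval_of_norm_le_iSup_norm_mul φ (hg'.const_mul C) fun f => ?_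
    calc ‖T f x‖ = ‖T f x * ({x} : Set X).indicator 1 x‖ := by simp
      _ ≤ ⨆ y, ‖T f y * ({x} : Set X).indicator 1 y‖ := norm_mul_le_iSup_norm_mul _ hx.1 x
      _ ≤ C * ⨆ y, ‖f y * g' y‖ := hT f
      _ = ⨆ y, ‖f y * (C * g' y)‖ := by
        rw [Real.mul_iSup_of_nonneg hC.le]
        simp [mul_left_comm _ (C : ℂ), Complex.norm_real, abs_of_pos hC]
  choose ψ hψ using hpoint
  have hψcont : Continuous ψ := continuous_of_forall_continuous_bcf_comp fun f => by
    simpa [Function.comp_def, ← hψ] using (T f).continuous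
  refine ⟨⟨ψ, hψcont⟩, fun f => ext fun x => hψ x f, fun ψ' hψ' => ?_⟩
  ext x
  exact eq_of_forall_bcf_apply_eq fun f => (DFunLike.congr_fun (hψ' f) x).symm.trans (hψ x f)
end

section
/- For fixed complex numbers w and z, the function h : [0, ∞) → ℝ given by h(t) = |w + t z| is right-differentiable at 0 with right derivative Re(hsign(conj(w)) z), where hsign(w)(z) := (w/|w|)·z if w ≠ 0 and hsign(0)(z) := |z|. -/
open Filter

noncomputable def hsign (w z : ℂ) : ℂ :=
  if w = 0 then (‖z‖ : ℂ) else (w / (‖w‖ : ℂ)) * z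

open Topology RealInnerProductSpace ComplexConjugate

section NormedSpace

variable {E : Type*} [NormedAddCommGroup E] [NormedSpace ℝ E]

theorem tendsto_norm_smul_div_nhdsGT (v : E) :
    Tendsto (fun t : ℝ => ‖t • v‖ / t) (𝓝[>] 0) (𝓝 ‖v‖) := by
  refine tendsto_const_nhds.congr' ?_
  filter_upwards [self_mem_nhdsWithin] with t (ht : 0 < t)
  rw [norm_smul, Real.norm_of_nonneg ht.le, mul_div_cancel_left₀ _ ht.ne']

end NormedSpace

section InnerProductSpace

variable {E : Type*} [NormedAddCommGroup E] [InnerProductSpace ℝ E]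

theorem hasDerivAt_norm_add_smul {x : E} (hx : x ≠ 0) (v : E) :
    HasDerivAt (fun t : ℝ => ‖x + t • v‖) (⟪x, v⟫ / ‖x‖) 0 := by
  have hline : HasDerivAt (fun t : ℝ => x + t • v) v 0 := by
    simpa using ((hasDerivAt_id (0 : ℝ)).smul_const v).const_add x
  -- `‖y‖ = √(‖y‖ ^ 2)`, and the square is differentiable everywhere, with positive value at `x`.
  have hsqrt := hline.norm_sq.sqrt (by simpa using hx)
  convert hsqrt using 1
  · simp only [Real.sqrt_sq (norm_nonneg _)]
  · simp only [zero_smul, add_zero, Real.sqrt_sq (norm_nonneg _)]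
    ring

end InnerProductSpace

theorem re_hsign_conj_of_ne_zero {w : ℂ} (hw : w ≠ 0) (z : ℂ) :
    (hsign (conj w) z).re = ⟪w, z⟫ / ‖w‖ := by
  rw [hsign, if_neg (by simpa using hw), Complex.norm_conj, div_mul_eq_mul_div,
    Complex.div_ofReal_re, Complex.inner, mul_comm]

/-- For fixed `w, z ∈ ℂ`, the map `t ↦ |w + t z|` is right-differentiable at `0` with
right derivative `Re (hsign (conj w) z)`. -/
theorem abs_right_deriv (w z : ℂ) :
    Tendsto (fun t : ℝ => (‖w + t * z‖ - ‖w‖) / t)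
      (nhdsWithin 0 (Set.Ioi 0)) (nhds ((hsign (starRingEnd ℂ w) z).re)) := by
  simp only [← Complex.real_smul]
  rcases eq_or_ne w 0 with rfl | hw
  · simpa [hsign] using tendsto_norm_smul_div_nhdsGT z
  · rw [re_hsign_conj_of_ne_zero hw]
    simpa [div_eq_inv_mul] using (hasDerivAt_norm_add_smul hw z).tendsto_slope_zero_right
end

section
/- Let X be a topological space. The map M ↦ I_M := {f ∈ C_b(X) : f vanishes on M} is an inclusion-reversing bijection between the collection of closed subsets of a completely regular Hausdorff space X and the collection of closed ideals of C_b(X) of this form; in particular, for closed subsets M, N ⊆ X one has M ⊆ N if and only if I_N ⊆ I_M, and M = N if and only if I_M = I_N. -/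
open BoundedContinuousFunction

/-- The vanishing ideal of a set `M ⊆ X`. -/
def vanishingIdeal' {X : Type*} [TopologicalSpace X] (M : Set X) : Set (X →ᵇ ℂ) :=
  {f : X →ᵇ ℂ | ∀ x ∈ M, f x = 0}

open unitInterval in
theorem CompletelyRegularSpace.exists_boundedContinuous_eqOn_zero_apply_eq_one
    {X 𝕜 : Type*} [TopologicalSpace X] [CompletelyRegularSpace X] [RCLike 𝕜]
    {N : Set X} (hN : IsClosed N) {x : X} (hx : x ∉ N) :
    ∃ F : X →ᵇ 𝕜, Set.EqOn F 0 N ∧ F x = 1 := by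
  obtain ⟨f, hf, hfx, hfN⟩ := CompletelyRegularSpace.completely_regular x N hN hx
  let oneSub : C(I, 𝕜) := ⟨fun t => ((σ t : ℝ) : 𝕜), by fun_prop⟩
  refine ⟨(mkOfCompact oneSub).compContinuous ⟨f, hf⟩, fun y hy => ?_, ?_⟩
  · simp [oneSub, hfN hy]
  · simp [oneSub, hfx]

theorem vanishingIdeal'_anti {X : Type*} [TopologicalSpace X] {M N : Set X} (h : M ⊆ N) :
    vanishingIdeal' N ⊆ vanishingIdeal' M :=
  fun _ hf x hx => hf x (h hx)

theorem vanishingIdeal'_subset_vanishingIdeal'_iff {X : Type*} [TopologicalSpace X]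
    [CompletelyRegularSpace X] {M N : Set X} (hN : IsClosed N) :
    vanishingIdeal' N ⊆ vanishingIdeal' M ↔ M ⊆ N := by
  refine ⟨fun h x hxM => ?_, vanishingIdeal'_anti⟩
  by_contra hxN
  obtain ⟨F, hFN, hFx⟩ :=
    CompletelyRegularSpace.exists_boundedContinuous_eqOn_zero_apply_eq_one (𝕜 := ℂ) hN hxN
  exact one_ne_zero (hFx ▸ h hFN x hxM)

theorem vanishingIdeal_order_reversing_bijection_general
    {X : Type*} [TopologicalSpace X] [CompletelyRegularSpace X]
    (M N : Set X) (hM : IsClosed M) (hN : IsClosed N) :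
    (M ⊆ N ↔ vanishingIdeal' N ⊆ vanishingIdeal' M) ∧
    (M = N ↔ vanishingIdeal' M = vanishingIdeal' N) := by
  refine ⟨(vanishingIdeal'_subset_vanishingIdeal'_iff hN).symm,
    ⟨fun h => h ▸ rfl, fun h => ?_⟩⟩
  exact (vanishingIdeal'_subset_vanishingIdeal'_iff hN).mp h.ge |>.antisymm
    ((vanishingIdeal'_subset_vanishingIdeal'_iff hM).mp h.le)

/-- On a completely regular Hausdorff space the map `M ↦ I_M` is an inclusion-reversing
bijection on closed subsets: `M ⊆ N ↔ I_N ⊆ I_M` and `M = N ↔ I_M = I_N`. -/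
theorem vanishingIdeal_order_reversing_bijection
    {X : Type*} [TopologicalSpace X] [CompletelyRegularSpace X] [T2Space X]
    (M N : Set X) (hM : IsClosed M) (hN : IsClosed N) :
    (M ⊆ N ↔ vanishingIdeal' N ⊆ vanishingIdeal' M) ∧
    (M = N ↔ vanishingIdeal' M = vanishingIdeal' N) :=
  vanishingIdeal_order_reversing_bijection_general M N hM hN
end

section
/- Let X be a completely regular Hausdorff space, φ = (φ_t)_{t≥0} a semiflow of continuous maps on X, and M ⊆ X a closed subset. Then M is φ-invariant (φ_t(M) ⊆ M for all t ≥ 0) if and only if the ideal I_M = {f ∈ C_b(X) : f|_M = 0} is invariant under every Koopman operator T_φ(t) f = f ∘ φ_t, i.e., T_φ(t) I_M ⊆ I_M for all t ≥ 0. -/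
/-!
Invariance of `M` under a single continuous map `ψ` already matches invariance of `I_M` under
`f ↦ f ∘ ψ`: if `ψ x ∉ M` for some `x ∈ M`, complete regularity provides `f ∈ I_M` with
`f (ψ x) = 1`, so `f ∘ ψ ∉ I_M`.
-/

open BoundedContinuousFunction

namespace CompletelyRegularSpace

variable {X : Type*} [TopologicalSpace X] [CompletelyRegularSpace X] {M : Set X}

theorem exists_bcf_complex_eq_zero_on_eq_one (hM : IsClosed M) {x : X} (hx : x ∉ M) :
    ∃ f : X →ᵇ ℂ, (∀ y ∈ M, f y = 0) ∧ f x = 1 := by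
  obtain ⟨g, hgx, hgM⟩ := exists_BCNN hM hx
  have hcoe : LipschitzWith 1 (fun r : NNReal => ((r : ℝ) : ℂ)) :=
    (Complex.isometry_ofReal.comp isometry_subtype_coe).lipschitz
  exact ⟨g.comp _ hcoe, fun y hy => by simp [hgM y hy], by simp [hgx]⟩

theorem mem_of_forall_bcf_eq_zero_on (hM : IsClosed M) {x : X}
    (hx : ∀ f : X →ᵇ ℂ, (∀ y ∈ M, f y = 0) → f x = 0) : x ∈ M := by
  by_contra hxM
  obtain ⟨f, hfM, hfx⟩ := exists_bcf_complex_eq_zero_on_eq_one hM hxM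
  simpa [hfx] using hx f hfM

theorem image_subset_iff_compContinuous_eq_zero_on (hM : IsClosed M) (ψ : C(X, X)) :
    ψ '' M ⊆ M ↔
      ∀ f : X →ᵇ ℂ, (∀ x ∈ M, f x = 0) → ∀ x ∈ M, f.compContinuous ψ x = 0 := by
  refine ⟨fun hψ f hf x hx => hf _ (hψ ⟨x, hx, rfl⟩), ?_⟩
  rintro h _ ⟨x, hx, rfl⟩
  exact mem_of_forall_bcf_eq_zero_on hM fun f hf => h f hf x hx

end CompletelyRegularSpace

theorem invariant_iff_ideal_invariant_general
    {X : Type*} [TopologicalSpace X] [CompletelyRegularSpace X]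
    (φ : ℝ → C(X, X))
    (M : Set X) (hM : IsClosed M) :
    (∀ t : ℝ, 0 ≤ t → (φ t) '' M ⊆ M) ↔
    (∀ t : ℝ, 0 ≤ t → ∀ f : X →ᵇ ℂ, (∀ x ∈ M, f x = 0) →
      ∀ x ∈ M, (f.compContinuous (φ t)) x = 0) :=
  forall₂_congr fun t _ =>
    CompletelyRegularSpace.image_subset_iff_compContinuous_eq_zero_on hM (φ t)

/-- For a semiflow `φ` on a completely regular Hausdorff space and a closed `M ⊆ X`,
the set `M` is `φ`-invariant iff the vanishing ideal `I_M` is invariant under all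
Koopman operators `T_φ(t) f = f ∘ φ_t`. -/
theorem invariant_iff_ideal_invariant
    {X : Type*} [TopologicalSpace X] [CompletelyRegularSpace X] [T2Space X]
    (φ : ℝ → C(X, X))
    (hφ0 : φ 0 = ContinuousMap.id X)
    (hφadd : ∀ s t : ℝ, 0 ≤ s → 0 ≤ t → (φ s).comp (φ t) = φ (s + t))
    (M : Set X) (hM : IsClosed M) :
    (∀ t : ℝ, 0 ≤ t → (φ t) '' M ⊆ M) ↔
    (∀ t : ℝ, 0 ≤ t → ∀ f : X →ᵇ ℂ, (∀ x ∈ M, f x = 0) →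
      ∀ x ∈ M, (f.compContinuous (φ t)) x = 0) :=
  invariant_iff_ideal_invariant_general φ M hM
end

section
/- Let X be a completely regular Hausdorff space, φ a jointly continuous semiflow on X, M ⊆ X a compact φ-invariant set, and 𝓑 a family of subsets of X. Then M is 𝓑-attractive (for every B ∈ 𝓑 and every open neighborhood U of M there is t₀ ≥ 0 with φ_t(B) ⊆ U for all t ≥ t₀) if and only if for every f ∈ C_b(X) vanishing on M and every B ∈ 𝓑, sup_{x ∈ B} |f(φ_t(x))| → 0 as t → ∞. -/
/-!
If `φ_t(B)` eventually lies in every neighbourhood of `M`, it eventually lies in `{‖f‖ < ε}` for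
any continuous `f` vanishing on `M`. Conversely, since `M` is compact and `X` completely regular,
some continuous `g : X → [0, 1]` is `0` on `M` and `1` off a given open `U ⊇ M` (a finite product
of functions each vanishing near a point of `M`); once `sup_B ‖g ∘ φ_t‖ < 1`, `φ_t(B) ⊆ U`.
-/

open BoundedContinuousFunction Filter Set Topology

section Separation

variable {X : Type*} [TopologicalSpace X] [CompletelyRegularSpace X] {U : Set X}

lemma CompletelyRegularSpace.exists_eventuallyEq_zero_eqOn_one {x : X} (hU : IsOpen U)
    (hx : x ∈ U) :
    ∃ h : C(X, ℝ), h =ᶠ[𝓝 x] 0 ∧ EqOn h 1 Uᶜ ∧ ∀ y, h y ∈ Icc (0 : ℝ) 1 := by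
  obtain ⟨g, hgc, hgx, hgU⟩ := CompletelyRegularSpace.completely_regular_isOpen x U hU hx
  refine ⟨⟨fun y => max (2 * (g y : ℝ) - 1) 0, by fun_prop⟩, ?_, fun y hy => ?_, fun y => ?_⟩
  · have hg_small : ∀ᶠ y in 𝓝 x, (g y : ℝ) < 1 / 2 :=
      (continuous_subtype_val.comp hgc).continuousAt.eventually_lt continuousAt_const
        (by simp [hgx])
    filter_upwards [hg_small] with y hy
    simp only [ContinuousMap.coe_mk, Pi.zero_apply]
    exact max_eq_right (by linarith)
  · norm_num [hgU hy]
  · exact ⟨le_max_right _ _, max_le (by linarith [(g y).2.2]) zero_le_one⟩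

lemma IsCompact.exists_continuous_eqOn_zero_one {K : Set X} (hK : IsCompact K) (hU : IsOpen U)
    (hKU : K ⊆ U) :
    ∃ h : C(X, ℝ), EqOn h 0 K ∧ EqOn h 1 Uᶜ ∧ ∀ y, h y ∈ Icc (0 : ℝ) 1 := by
  choose! g hg0 hg1 hg01 using
    fun x (hx : x ∈ K) => CompletelyRegularSpace.exists_eventuallyEq_zero_eqOn_one hU (hKU hx)
  obtain ⟨s, hsK, hcover⟩ := hK.elim_nhds_subcover (fun x => {y | g x y = 0})
    fun x hx => hg0 x hx
  refine ⟨∏ x ∈ s, g x, fun y hy => ?_, fun y hy => ?_, fun y => ?_⟩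
  · obtain ⟨x, hx, hxy⟩ := mem_iUnion₂.1 (hcover hy)
    simpa [ContinuousMap.prod_apply] using Finset.prod_eq_zero (f := fun x => g x y) hx hxy
  · simpa [ContinuousMap.prod_apply] using Finset.prod_eq_one fun x hx => hg1 x (hsK x hx) hy
  · simp only [ContinuousMap.prod_apply]
    exact ⟨Finset.prod_nonneg fun x hx => (hg01 x (hsK x hx) y).1,
      Finset.prod_le_one (fun x hx => (hg01 x (hsK x hx) y).1)
        fun x hx => (hg01 x (hsK x hx) y).2⟩

end Separation

lemma Filter.eventually_atTop_iff_exists_ge_forall_ge {α : Type*} [Preorder α]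
    [IsDirectedOrder α] (a : α) {p : α → Prop} :
    (∀ᶠ x in atTop, p x) ↔ ∃ x₀, a ≤ x₀ ∧ ∀ x ≥ x₀, p x :=
  (atTop_basis' a).eventually_iff

section Attraction

variable {X ι : Type*} [TopologicalSpace X] (φ : ι → X → X) {l : Filter ι} {M B : Set X}

lemma tendsto_iSup_norm_comp_nhds_zero {E : Type*} [SeminormedAddCommGroup E] {f : X → E}
    (hf : Continuous f) (hfM : ∀ x ∈ M, f x = 0)
    (hB : ∀ U, IsOpen U → M ⊆ U → ∀ᶠ t in l, MapsTo (φ t) B U) :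
    Tendsto (fun t => ⨆ x : B, ‖f (φ t x)‖) l (𝓝 0) := by
  refine tendsto_order.2 ⟨fun a ha => .of_forall fun t =>
    ha.trans_le (Real.iSup_nonneg fun _ => norm_nonneg _), fun a ha => ?_⟩
  have hU : IsOpen {y | ‖f y‖ < a / 2} := isOpen_lt (by fun_prop) continuous_const
  filter_upwards [hB _ hU fun x hx => by simp [hfM x hx, ha]] with t ht
  exact (Real.iSup_le (fun x => (ht x.2).le) (by positivity)).trans_lt (half_lt_self ha)

lemma eventually_mapsTo_of_tendsto_iSup_norm [CompletelyRegularSpace X] {𝕜 : Type*} [RCLike 𝕜]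
    (hM : IsCompact M)
    (h : ∀ f : X →ᵇ 𝕜, (∀ x ∈ M, f x = 0) → Tendsto (fun t => ⨆ x : B, ‖f (φ t x)‖) l (𝓝 0))
    {U : Set X} (hU : IsOpen U) (hMU : M ⊆ U) :
    ∀ᶠ t in l, MapsTo (φ t) B U := by
  obtain ⟨g, hg0, hg1, hg01⟩ := hM.exists_continuous_eqOn_zero_one hU hMU
  have hfg : ∀ y, ‖(g y : 𝕜)‖ = g y := fun y => by
    rw [RCLike.norm_ofReal, abs_of_nonneg (hg01 y).1]
  let f : X →ᵇ 𝕜 := ofNormedAddCommGroup (fun y => (g y : 𝕜)) (by fun_prop) 1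
    fun y => (hfg y).trans_le (hg01 y).2
  filter_upwards [(tendsto_order.1 (h f fun x hx => by simp [f, hg0 hx])).2 1 one_pos]
    with t ht x hx
  by_contra hxU
  have hbdd : BddAbove (range fun x : B => ‖f (φ t x)‖) :=
    ⟨‖f‖, forall_mem_range.2 fun _ => f.norm_coe_le_norm _⟩
  have hle : ‖f (φ t x)‖ ≤ ⨆ x : B, ‖f (φ t x)‖ := le_ciSup hbdd ⟨x, hx⟩
  have hfx : ‖f (φ t x)‖ = 1 := (hfg _).trans (hg1 hxU)
  linarith

end Attraction

theorem attractive_iff_koopman_stability_general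
    {X : Type*} [TopologicalSpace X] [CompletelyRegularSpace X]
    (φ : ℝ → X → X)
    (M : Set X) (hMcp : IsCompact M)
    (𝓑 : Set (Set X)) :
    (∀ B ∈ 𝓑, ∀ U : Set X, IsOpen U → M ⊆ U →
        ∃ t₀ : ℝ, 0 ≤ t₀ ∧ ∀ t ≥ t₀, φ t '' B ⊆ U) ↔
    (∀ f : X →ᵇ ℂ, (∀ x ∈ M, f x = 0) → ∀ B ∈ 𝓑,
        Tendsto (fun t : ℝ => ⨆ x : B, ‖f (φ t x)‖) atTop (nhds 0)) := by
  simp only [← mapsTo_iff_image_subset, ← eventually_atTop_iff_exists_ge_forall_ge]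
  constructor
  · intro hattr f hfM B hB
    exact tendsto_iSup_norm_comp_nhds_zero φ f.continuous hfM (hattr B hB)
  · intro hstab B hB U hU hMU
    exact eventually_mapsTo_of_tendsto_iSup_norm φ hMcp (fun f hfM => hstab f hfM B hB) hU hMU

/-- A compact invariant set `M` is `𝓑`-attractive iff for every `f ∈ C_b(X)`
vanishing on `M` and every `B ∈ 𝓑` one has `sup_{x ∈ B} |f(φ_t(x))| → 0` as `t → ∞`. -/
theorem attractive_iff_koopman_stability
    {X : Type*} [TopologicalSpace X] [CompletelyRegularSpace X] [T2Space X]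
    (φ : ℝ → X → X)
    (hφcont : Continuous fun p : ℝ × X => φ p.1 p.2)
    (hφ0 : φ 0 = id)
    (hφadd : ∀ s t : ℝ, 0 ≤ s → 0 ≤ t → φ s ∘ φ t = φ (s + t))
    (M : Set X) (hMcp : IsCompact M)
    (hMinv : ∀ t : ℝ, 0 ≤ t → φ t '' M ⊆ M)
    (𝓑 : Set (Set X)) :
    (∀ B ∈ 𝓑, ∀ U : Set X, IsOpen U → M ⊆ U →
        ∃ t₀ : ℝ, 0 ≤ t₀ ∧ ∀ t ≥ t₀, φ t '' B ⊆ U) ↔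
    (∀ f : X →ᵇ ℂ, (∀ x ∈ M, f x = 0) → ∀ B ∈ 𝓑,
        Tendsto (fun t : ℝ => ⨆ x : B, ‖f (φ t x)‖) atTop (nhds 0)) :=
  attractive_iff_koopman_stability_general φ M hMcp 𝓑
end

section
/- Let X be a completely regular Hausdorff space, φ a jointly continuous semiflow on X, and 𝓑 a nonempty family of subsets of X with ⋃𝓑 ≠ ∅ such that for every B ∈ 𝓑 and t ≥ 0 there is C ∈ 𝓑 with φ_t(B) ⊆ C. Suppose A ⊆ X is a nonempty compact 𝓑-absorbing set: for every B ∈ 𝓑 there is t₀ ≥ 0 with φ_t(B) ⊆ A for all t ≥ t₀. Then the set I := {f ∈ C_b(X) : for all B ∈ 𝓑, sup_{x ∈ B} |f(φ_t(x))| → 0 as t → ∞} is a proper closed ideal of C_b(X) (closed in the supremum norm) that is invariant under all Koopman operators T_φ(t). -/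
open BoundedContinuousFunction Filter

open Topology

/-!
Write `‖f‖_S` for the supremum of `‖f‖` over `S`. The quantity in the definition of `I` is
`‖f‖_{φ_t(B)}`. On a fixed set `S`, `‖·‖_S` is subadditive, satisfies `‖f g‖_S ≤ ‖f‖ ‖g‖_S`, and is
1-Lipschitz for the uniform distance; this gives the ideal properties, and closedness because a
pointwise limit condition over an equicontinuous family is closed. The semigroup law gives
`‖f ∘ φ_s‖_{φ_t(B)} = ‖f‖_{φ_{s+t}(B)}`, hence invariance, and `‖𝟙‖_{φ_t(B)} = 1` as soon as `B` is
nonempty.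
-/

namespace BoundedContinuousFunction

variable {X Y E : Type*} [TopologicalSpace X] [TopologicalSpace Y]

section SeminormedAddCommGroup

variable [SeminormedAddCommGroup E] {S : Set X}

noncomputable def supNormOn (S : Set X) (f : X →ᵇ E) : ℝ := ⨆ x : S, ‖f x‖

lemma supNormOn_nonneg (S : Set X) (f : X →ᵇ E) : 0 ≤ supNormOn S f :=
  Real.iSup_nonneg fun _ => norm_nonneg _

lemma norm_le_supNormOn (f : X →ᵇ E) {x : X} (hx : x ∈ S) : ‖f x‖ ≤ supNormOn S f :=
  le_ciSup (f := fun y : S => ‖f y‖) ⟨‖f‖, by rintro _ ⟨y, rfl⟩; exact f.norm_coe_le_norm y⟩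
    ⟨x, hx⟩

lemma supNormOn_le {f : X →ᵇ E} {c : ℝ} (hc : 0 ≤ c) (h : ∀ x ∈ S, ‖f x‖ ≤ c) :
    supNormOn S f ≤ c :=
  Real.iSup_le (fun x => h x x.2) hc

lemma supNormOn_add_le (f g : X →ᵇ E) :
    supNormOn S (f + g) ≤ supNormOn S f + supNormOn S g :=
  supNormOn_le (add_nonneg (supNormOn_nonneg S f) (supNormOn_nonneg S g)) fun x hx =>
    (norm_add_le (f x) (g x)).trans
      (add_le_add (norm_le_supNormOn f hx) (norm_le_supNormOn g hx))

lemma supNormOn_le_add_dist (f g : X →ᵇ E) : supNormOn S f ≤ supNormOn S g + dist f g :=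
  supNormOn_le (add_nonneg (supNormOn_nonneg S g) dist_nonneg) fun x hx =>
    calc ‖f x‖ ≤ ‖g x‖ + dist (f x) (g x) := by
          rw [dist_eq_norm]; exact norm_le_norm_add_norm_sub' _ _
      _ ≤ supNormOn S g + dist f g :=
        add_le_add (norm_le_supNormOn g hx) (dist_coe_le_dist x)

lemma lipschitzWith_supNormOn (S : Set X) :
    LipschitzWith 1 (supNormOn S : (X →ᵇ E) → ℝ) :=
  LipschitzWith.of_le_add supNormOn_le_add_dist

lemma supNormOn_image (g : C(Y, X)) (S : Set Y) (f : X →ᵇ E) :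
    supNormOn (g '' S) f = supNormOn S (f.compContinuous g) := by
  refine le_antisymm (supNormOn_le (supNormOn_nonneg _ _) ?_)
    (supNormOn_le (supNormOn_nonneg _ _) fun y hy => norm_le_supNormOn f (Set.mem_image_of_mem g hy))
  rintro _ ⟨y, hy, rfl⟩
  exact norm_le_supNormOn (f.compContinuous g) hy

lemma supNormOn_smul_le {𝕜 : Type*} [NormedField 𝕜] [NormedSpace 𝕜 E] (c : 𝕜) (f : X →ᵇ E) :
    supNormOn S (c • f) ≤ ‖c‖ * supNormOn S f :=
  supNormOn_le (mul_nonneg (norm_nonneg c) (supNormOn_nonneg S f)) fun x hx => by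
    rw [smul_apply, norm_smul]
    exact mul_le_mul_of_nonneg_left (norm_le_supNormOn f hx) (norm_nonneg c)

end SeminormedAddCommGroup

lemma supNormOn_mul_le {R : Type*} [NonUnitalSeminormedRing R] {S : Set X} (f g : X →ᵇ R) :
    supNormOn S (f * g) ≤ ‖f‖ * supNormOn S g :=
  supNormOn_le (mul_nonneg (norm_nonneg f) (supNormOn_nonneg S g)) fun x hx =>
    (norm_mul_le (f x) (g x)).trans <|
      mul_le_mul (f.norm_coe_le_norm x) (norm_le_supNormOn g hx) (norm_nonneg _) (norm_nonneg f)

lemma supNormOn_one {R : Type*} [SeminormedRing R] [NormOneClass R] {S : Set X}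
    (hS : S.Nonempty) : supNormOn S (1 : X →ᵇ R) = 1 := by
  have := hS.to_subtype
  simp [supNormOn]

lemma isClosed_setOf_tendsto_supNormOn {ι : Type*} [SeminormedAddCommGroup E] (S : ι → Set X)
    (l : Filter ι) : IsClosed {f : X →ᵇ E | Tendsto (fun i => supNormOn (S i) f) l (𝓝 0)} :=
  (LipschitzWith.uniformEquicontinuous _ 1 fun i => lipschitzWith_supNormOn (S i)).equicontinuous
    |>.isClosed_setOfPred_tendsto continuous_const

end BoundedContinuousFunction

section Decay

variable {X E : Type*} [TopologicalSpace X] [SeminormedAddCommGroup E]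

def decayingAlong (φ : ℝ → C(X, X)) (𝓑 : Set (Set X)) : Set (X →ᵇ E) :=
  {f | ∀ B ∈ 𝓑, Tendsto (fun t => supNormOn (φ t '' B) f) atTop (𝓝 0)}

variable {φ : ℝ → C(X, X)} {𝓑 : Set (Set X)}

lemma mem_decayingAlong_iff {f : X →ᵇ E} :
    f ∈ decayingAlong φ 𝓑 ↔ ∀ B ∈ 𝓑, Tendsto (fun t => ⨆ x : B, ‖f (φ t x)‖) atTop (𝓝 0) := by
  simp only [decayingAlong, Set.mem_ofPred_eq, supNormOn_image]
  rfl

lemma add_mem_decayingAlong {f g : X →ᵇ E} (hf : f ∈ decayingAlong φ 𝓑)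
    (hg : g ∈ decayingAlong φ 𝓑) : f + g ∈ decayingAlong φ 𝓑 := fun B hB => by
  refine squeeze_zero (fun _ => supNormOn_nonneg _ _) (fun t => supNormOn_add_le f g) ?_
  simpa using (hf B hB).add (hg B hB)

lemma smul_mem_decayingAlong {𝕜 : Type*} [NormedField 𝕜] [NormedSpace 𝕜 E] (c : 𝕜)
    {f : X →ᵇ E} (hf : f ∈ decayingAlong φ 𝓑) : c • f ∈ decayingAlong φ 𝓑 := fun B hB => by
  refine squeeze_zero (fun _ => supNormOn_nonneg _ _) (fun t => supNormOn_smul_le c f) ?_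
  simpa using (hf B hB).const_mul ‖c‖

lemma mul_mem_decayingAlong {R : Type*} [NonUnitalSeminormedRing R] (f : X →ᵇ R) {g : X →ᵇ R}
    (hg : g ∈ decayingAlong φ 𝓑) : f * g ∈ decayingAlong φ 𝓑 := fun B hB => by
  refine squeeze_zero (fun _ => supNormOn_nonneg _ _) (fun t => supNormOn_mul_le f g) ?_
  simpa using (hg B hB).const_mul ‖f‖

lemma one_notMem_decayingAlong {R : Type*} [SeminormedRing R] [NormOneClass R]
    (h𝓑 : (⋃₀ 𝓑).Nonempty) : (1 : X →ᵇ R) ∉ decayingAlong φ 𝓑 := fun h1 => by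
  obtain ⟨x, B, hB, hx⟩ := h𝓑
  have : Tendsto (fun _ : ℝ => (1 : ℝ)) atTop (𝓝 0) :=
    (h1 B hB).congr fun t => supNormOn_one ⟨φ t x, Set.mem_image_of_mem _ hx⟩
  exact one_ne_zero (tendsto_const_nhds_iff.mp this)

lemma isClosed_decayingAlong : IsClosed (decayingAlong φ 𝓑 : Set (X →ᵇ E)) := by
  simp only [decayingAlong, Set.ofPred_forall]
  exact isClosed_iInter fun B => isClosed_iInter fun _ =>
    isClosed_setOf_tendsto_supNormOn (fun t => φ t '' B) atTop

lemma compContinuous_mem_decayingAlong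
    (hφ : ∀ s t : ℝ, 0 ≤ s → 0 ≤ t → (φ s).comp (φ t) = φ (s + t)) {s : ℝ} (hs : 0 ≤ s)
    {f : X →ᵇ E} (hf : f ∈ decayingAlong φ 𝓑) : f.compContinuous (φ s) ∈ decayingAlong φ 𝓑 :=
  fun B hB => by
    refine ((hf B hB).comp (tendsto_atTop_add_const_left atTop s tendsto_id)).congr' ?_
    filter_upwards [eventually_ge_atTop 0] with t ht
    rw [Function.comp_apply, ← supNormOn_image, Set.image_image, id, ← hφ s t hs ht]
    rfl

end Decay

theorem absorbing_gives_proper_closed_invariant_ideal_general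
    {X : Type*} [TopologicalSpace X]
    (φ : ℝ → C(X, X))
    (hφadd : ∀ s t : ℝ, 0 ≤ s → 0 ≤ t → (φ s).comp (φ t) = φ (s + t))
    (𝓑 : Set (Set X)) (h𝓑ne : (⋃₀ 𝓑).Nonempty) :
    let I : Set (X →ᵇ ℂ) := {f | ∀ B ∈ 𝓑,
      Tendsto (fun t : ℝ => ⨆ x : B, ‖f (φ t x)‖) atTop (nhds 0)}
    (∀ f g, f ∈ I → g ∈ I → f + g ∈ I) ∧
    (∀ (c : ℂ) g, g ∈ I → c • g ∈ I) ∧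
    (∀ f g, g ∈ I → f * g ∈ I) ∧
    ((1 : X →ᵇ ℂ) ∉ I) ∧
    IsClosed I ∧
    (∀ t : ℝ, 0 ≤ t → ∀ f ∈ I, f.compContinuous (φ t) ∈ I) := by
  intro I
  have hI : I = decayingAlong φ 𝓑 := Set.ext fun _ => mem_decayingAlong_iff.symm
  rw [hI]
  exact ⟨fun _ _ => add_mem_decayingAlong, fun c _ => smul_mem_decayingAlong c,
    fun f _ => mul_mem_decayingAlong f, one_notMem_decayingAlong h𝓑ne, isClosed_decayingAlong,
    fun _ hs _ => compContinuous_mem_decayingAlong hφadd hs⟩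

/-- Given a jointly continuous semiflow `φ`, a suitable family `𝓑` of subsets and a
nonempty compact `𝓑`-absorbing set `A`, the set `I` of all `f ∈ C_b(X)` with
`sup_{x ∈ B} |f(φ_t(x))| → 0` for every `B ∈ 𝓑` is a proper, norm-closed,
Koopman-invariant ideal of `C_b(X)`. -/
theorem absorbing_gives_proper_closed_invariant_ideal
    {X : Type*} [TopologicalSpace X] [CompletelyRegularSpace X] [T2Space X]
    (φ : ℝ → C(X, X))
    (hφcont : Continuous fun p : ℝ × X => φ p.1 p.2)
    (hφ0 : φ 0 = ContinuousMap.id X)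
    (hφadd : ∀ s t : ℝ, 0 ≤ s → 0 ≤ t → (φ s).comp (φ t) = φ (s + t))
    (𝓑 : Set (Set X)) (h𝓑ne : (⋃₀ 𝓑).Nonempty)
    (h𝓑inv : ∀ B ∈ 𝓑, ∀ t : ℝ, 0 ≤ t → ∃ C ∈ 𝓑, (φ t) '' B ⊆ C)
    (A : Set X) (hAne : A.Nonempty) (hAcp : IsCompact A)
    (hAabs : ∀ B ∈ 𝓑, ∃ t₀ : ℝ, 0 ≤ t₀ ∧ ∀ t ≥ t₀, (φ t) '' B ⊆ A) :
    let I : Set (X →ᵇ ℂ) := {f | ∀ B ∈ 𝓑,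
      Tendsto (fun t : ℝ => ⨆ x : B, ‖f (φ t x)‖) atTop (nhds 0)}
    (∀ f g, f ∈ I → g ∈ I → f + g ∈ I) ∧
    (∀ (c : ℂ) g, g ∈ I → c • g ∈ I) ∧
    (∀ f g, g ∈ I → f * g ∈ I) ∧
    ((1 : X →ᵇ ℂ) ∉ I) ∧
    IsClosed I ∧
    (∀ t : ℝ, 0 ≤ t → ∀ f ∈ I, f.compContinuous (φ t) ∈ I) :=
  absorbing_gives_proper_closed_invariant_ideal_general φ hφadd 𝓑 h𝓑ne
end

section
/- Let χ : C_b(X) → ℂ be a unital algebra homomorphism on the algebra of bounded continuous complex-valued functions on a topological space X. Then χ is a unital lattice homomorphism, i.e., χ(|f|) = |χ(f)| for all f ∈ C_b(X). Conversely, every positive unital linear functional χ with χ(|f|) = |χ(f)| for all f is multiplicative. -/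
open BoundedContinuousFunction

/-- The pointwise modulus `|f|` of `f ∈ C_b(X)`, viewed as a (real-valued) element of
`C_b(X)` with complex values. -/
noncomputable def cabs {X : Type*} [TopologicalSpace X] (f : X →ᵇ ℂ) : X →ᵇ ℂ :=
  BoundedContinuousFunction.comp (fun z : ℂ => ((‖z‖ : ℝ) : ℂ))
    (LipschitzWith.of_dist_le_mul (by
      intro a b
      rw [NNReal.coe_one, one_mul, Complex.isometry_ofReal.dist_eq, Real.dist_eq, dist_eq_norm]
      exact abs_norm_sub_norm_le a b)) f

/-!
Forward direction: a character of a C*-algebra is a `*`-homomorphism, so it sends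
`star a * a` to `‖φ a‖²`. Writing `|f| = s * s` with `s = √|f|` self-adjoint shows that `φ |f|` is
a nonnegative real, and `|f|² = f̄ f` shows that its square is `‖φ f‖²`.

Converse: put `h = f - χ(f)·1`, so `χ h = 0`. Since `‖g‖ |h| - |h g|` is a nonnegative function,
positivity and the lattice identity give `‖χ (h g)‖ ≤ ‖g‖ ‖χ h‖ = 0`, and expanding
`f g = h g + χ(f) g` yields multiplicativity.
-/

lemma AlgHom.map_star_mul_self_eq_norm_sq {A : Type*} [CStarAlgebra A] (φ : A →ₐ[ℂ] ℂ) (a : A) :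
    φ (star a * a) = (‖φ a‖ : ℂ) ^ 2 := by
  rw [map_mul, map_star, Complex.star_def, Complex.conj_mul']

section

variable {X : Type*} [TopologicalSpace X]

lemma cabs_apply (f : X →ᵇ ℂ) (x : X) : cabs f x = ((‖f x‖ : ℝ) : ℂ) := rfl

lemma cabs_mul_self (f : X →ᵇ ℂ) : cabs f * cabs f = star f * f := by
  ext x
  simp only [mul_apply, star_apply, cabs_apply, Complex.star_def, Complex.conj_mul']
  ring

noncomputable def sqrtCabs (f : X →ᵇ ℂ) : X →ᵇ ℂ :=
  ofNormedAddCommGroup (fun x => (√‖f x‖ : ℂ))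
    (Complex.continuous_ofReal.comp (Real.continuous_sqrt.comp f.continuous.norm))
    √‖f‖
    (fun x => by
      rw [Complex.norm_real, Real.norm_of_nonneg (Real.sqrt_nonneg _)]
      exact Real.sqrt_le_sqrt (f.norm_coe_le_norm x))

lemma sqrtCabs_apply (f : X →ᵇ ℂ) (x : X) : sqrtCabs f x = (√‖f x‖ : ℂ) := rfl

lemma star_sqrtCabs (f : X →ᵇ ℂ) : star (sqrtCabs f) = sqrtCabs f := by
  ext x
  rw [star_apply, sqrtCabs_apply, Complex.star_def, Complex.conj_ofReal]

lemma sqrtCabs_mul_self (f : X →ᵇ ℂ) : sqrtCabs f * sqrtCabs f = cabs f := by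
  ext x
  rw [mul_apply, sqrtCabs_apply, cabs_apply, ← Complex.ofReal_mul,
    Real.mul_self_sqrt (norm_nonneg _)]

lemma AlgHom.map_cabs (φ : (X →ᵇ ℂ) →ₐ[ℂ] ℂ) (f : X →ᵇ ℂ) :
    φ (cabs f) = ((‖φ f‖ : ℝ) : ℂ) := by
  have hsqrt : φ (cabs f) = (‖φ (sqrtCabs f)‖ : ℂ) ^ 2 := by
    rw [← sqrtCabs_mul_self]
    nth_rw 1 [← star_sqrtCabs]
    exact φ.map_star_mul_self_eq_norm_sq _
  have hsq : φ (cabs f) ^ 2 = (‖φ f‖ : ℂ) ^ 2 := by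
    rw [sq, ← map_mul, cabs_mul_self, φ.map_star_mul_self_eq_norm_sq]
  rw [hsqrt] at hsq ⊢
  norm_cast at hsq ⊢
  exact (sq_eq_sq₀ (by positivity) (norm_nonneg _)).mp hsq

lemma norm_map_mul_le_of_map_cabs (χ : (X →ᵇ ℂ) →ₗ[ℂ] ℂ)
    (hpos : ∀ f : X →ᵇ ℂ, (∀ x, 0 ≤ (f x).re ∧ (f x).im = 0) → 0 ≤ (χ f).re)
    (hlat : ∀ f : X →ᵇ ℂ, χ (cabs f) = ((‖χ f‖ : ℝ) : ℂ)) (h g : X →ᵇ ℂ) :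
    ‖χ (h * g)‖ ≤ ‖g‖ * ‖χ h‖ := by
  have hnonneg := hpos ((‖g‖ : ℂ) • cabs h - cabs (h * g)) fun x => by
    have hle : ‖h x * g x‖ ≤ ‖g‖ * ‖h x‖ := by
      rw [norm_mul, mul_comm]
      exact mul_le_mul_of_nonneg_right (g.norm_coe_le_norm x) (norm_nonneg _)
    simpa [cabs_apply] using hle
  simpa [hlat] using hnonneg

lemma map_mul_of_map_cabs (χ : (X →ᵇ ℂ) →ₗ[ℂ] ℂ) (hone : χ 1 = 1)
    (hpos : ∀ f : X →ᵇ ℂ, (∀ x, 0 ≤ (f x).re ∧ (f x).im = 0) → 0 ≤ (χ f).re)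
    (hlat : ∀ f : X →ᵇ ℂ, χ (cabs f) = ((‖χ f‖ : ℝ) : ℂ)) (f g : X →ᵇ ℂ) :
    χ (f * g) = χ f * χ g := by
  set h := f - χ f • (1 : X →ᵇ ℂ)
  have hχh : χ h = 0 := by simp [h, hone]
  have hχhg : χ (h * g) = 0 := by
    simpa [hχh] using norm_map_mul_le_of_map_cabs χ hpos hlat h g
  have hfg : f * g = h * g + χ f • g := by simp [h, sub_mul]
  rw [hfg, map_add, map_smul, hχhg, zero_add, smul_eq_mul]

end

/-- A unital algebra homomorphism `χ : C_b(X) → ℂ` is a lattice homomorphism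
(`χ(|f|) = |χ(f)|`); conversely, a positive unital linear functional satisfying
`χ(|f|) = |χ(f)|` for all `f` is multiplicative. -/
theorem character_lattice_hom_iff_multiplicative
    {X : Type*} [TopologicalSpace X]
    (χ : (X →ᵇ ℂ) →ₗ[ℂ] ℂ) (hone : χ 1 = 1) :
    ((∀ f g : X →ᵇ ℂ, χ (f * g) = χ f * χ g) →
      ∀ f : X →ᵇ ℂ, χ (cabs f) = ((‖χ f‖ : ℝ) : ℂ)) ∧
    (((∀ f : X →ᵇ ℂ, (∀ x, 0 ≤ (f x).re ∧ (f x).im = 0) →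
          0 ≤ (χ f).re ∧ (χ f).im = 0) ∧
        (∀ f : X →ᵇ ℂ, χ (cabs f) = ((‖χ f‖ : ℝ) : ℂ))) →
      ∀ f g : X →ᵇ ℂ, χ (f * g) = χ f * χ g) :=
  ⟨fun hmul => (AlgHom.ofLinearMap χ hone hmul).map_cabs,
    fun ⟨hpos, hlat⟩ => map_mul_of_map_cabs χ hone (fun f hf => (hpos f hf).1) hlat⟩
end

section
/- Let E be a topological vector space, I ⊆ ℝ a compact interval containing t₀, H : I → L(E) strongly continuous and such that {H(t) : t ∈ I} is equicontinuous, and h : I → E continuous. If h is differentiable at t₀ and t ↦ H(t) h(t₀) is differentiable at t₀, then t ↦ H(t) h(t) is continuous on I and differentiable at t₀ with derivative H(t₀) h'(t₀) + (d/dt)|_{t=t₀} [H(t) h(t₀)]. -/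
open Filter Topology

section EquicontinuousFamily

variable {ι R E F : Type*} [Semiring R]
  [AddCommGroup E] [Module R E] [TopologicalSpace E]
  [AddCommGroup F] [Module R F] [TopologicalSpace F]
  {H : ι → E →L[R] F} {s : Set ι} {l : Filter ι}

theorem tendsto_apply_zero_of_equicontinuous
    (hequi : ∀ U ∈ 𝓝 (0 : F), ∃ V ∈ 𝓝 (0 : E), ∀ t ∈ s, ∀ x ∈ V, H t x ∈ U)
    (hl : ∀ᶠ t in l, t ∈ s) {g : ι → E} (hg : Tendsto g l (𝓝 0)) :
    Tendsto (fun t => H t (g t)) l (𝓝 0) := by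
  intro U hU
  obtain ⟨V, hV, hHV⟩ := hequi U hU
  exact (hl.and (hg hV)).mono fun t ⟨ht, hgt⟩ => hHV t ht _ hgt

/-- Writing `H t (g t) = H t (g t - x) + H t x`, equicontinuity kills the first term. -/
theorem tendsto_apply_of_equicontinuous [IsTopologicalAddGroup E] [ContinuousAdd F]
    (hequi : ∀ U ∈ 𝓝 (0 : F), ∃ V ∈ 𝓝 (0 : E), ∀ t ∈ s, ∀ x ∈ V, H t x ∈ U)
    (hl : ∀ᶠ t in l, t ∈ s) {g : ι → E} {x : E} {y : F}
    (hg : Tendsto g l (𝓝 x)) (hHx : Tendsto (fun t => H t x) l (𝓝 y)) :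
    Tendsto (fun t => H t (g t)) l (𝓝 y) := by
  have hgx : Tendsto (fun t => g t - x) l (𝓝 0) := by
    simpa using hg.sub_const x
  simpa using (tendsto_apply_zero_of_equicontinuous hequi hl hgx).add hHx

end EquicontinuousFamily

theorem product_rule_equicontinuous_general
    {E : Type*} [AddCommGroup E] [Module ℝ E] [TopologicalSpace E]
    [IsTopologicalAddGroup E]
    (a b t₀ : ℝ) (ht₀ : t₀ ∈ Set.Icc a b)
    (H : ℝ → E →L[ℝ] E) (h : ℝ → E) (v w : E)
    (hstrong : ∀ x : E, ContinuousOn (fun t => H t x) (Set.Icc a b))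
    (hequi : ∀ U ∈ nhds (0 : E), ∃ V ∈ nhds (0 : E),
      ∀ t ∈ Set.Icc a b, ∀ x ∈ V, H t x ∈ U)
    (hh : ContinuousOn h (Set.Icc a b))
    (hdiff : Tendsto (fun t : ℝ => (t - t₀)⁻¹ • (h t - h t₀))
      (nhdsWithin t₀ (Set.Icc a b \ {t₀})) (nhds v))
    (hHdiff : Tendsto (fun t : ℝ => (t - t₀)⁻¹ • (H t (h t₀) - H t₀ (h t₀)))
      (nhdsWithin t₀ (Set.Icc a b \ {t₀})) (nhds w)) :
    ContinuousOn (fun t => H t (h t)) (Set.Icc a b) ∧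
    Tendsto (fun t : ℝ => (t - t₀)⁻¹ • (H t (h t) - H t₀ (h t₀)))
      (nhdsWithin t₀ (Set.Icc a b \ {t₀})) (nhds (H t₀ v + w)) := by
  refine ⟨fun s hs => tendsto_apply_of_equicontinuous hequi
    eventually_mem_nhdsWithin (hh s hs) (hstrong (h s) s hs), ?_⟩
  have hmem : ∀ᶠ t in 𝓝[Set.Icc a b \ {t₀}] t₀, t ∈ Set.Icc a b :=
    eventually_mem_nhdsWithin.mono fun t ht => ht.1
  have hHv : Tendsto (fun t => H t v) (𝓝[Set.Icc a b \ {t₀}] t₀) (𝓝 (H t₀ v)) :=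
    (hstrong v t₀ ht₀).mono_left (nhdsWithin_mono _ Set.sdiff_subset)
  -- `H t (h t) - H t₀ (h t₀) = H t (h t - h t₀) + (H t (h t₀) - H t₀ (h t₀))`
  refine ((tendsto_apply_of_equicontinuous hequi hmem hdiff hHv).add hHdiff).congr fun t => ?_
  simp only [map_sub, map_smul, smul_sub]
  abel

/-- Product rule lemma: if `H : I → L(E)` is strongly continuous and equicontinuous on a
compact interval `I`, `h : I → E` is continuous, `h` is differentiable at `t₀` and
`t ↦ H(t) h(t₀)` is differentiable at `t₀`, then `t ↦ H(t) h(t)` is continuous on `I`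
and differentiable at `t₀` with derivative `H(t₀) h'(t₀) + (d/dt)|_{t₀} H(t) h(t₀)`. -/
theorem product_rule_equicontinuous
    {E : Type*} [AddCommGroup E] [Module ℝ E] [TopologicalSpace E]
    [IsTopologicalAddGroup E] [ContinuousSMul ℝ E]
    (a b t₀ : ℝ) (hab : a ≤ b) (ht₀ : t₀ ∈ Set.Icc a b)
    (H : ℝ → E →L[ℝ] E) (h : ℝ → E) (v w : E)
    (hstrong : ∀ x : E, ContinuousOn (fun t => H t x) (Set.Icc a b))
    (hequi : ∀ U ∈ nhds (0 : E), ∃ V ∈ nhds (0 : E),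
      ∀ t ∈ Set.Icc a b, ∀ x ∈ V, H t x ∈ U)
    (hh : ContinuousOn h (Set.Icc a b))
    (hdiff : Tendsto (fun t : ℝ => (t - t₀)⁻¹ • (h t - h t₀))
      (nhdsWithin t₀ (Set.Icc a b \ {t₀})) (nhds v))
    (hHdiff : Tendsto (fun t : ℝ => (t - t₀)⁻¹ • (H t (h t₀) - H t₀ (h t₀)))
      (nhdsWithin t₀ (Set.Icc a b \ {t₀})) (nhds w)) :
    ContinuousOn (fun t => H t (h t)) (Set.Icc a b) ∧
    Tendsto (fun t : ℝ => (t - t₀)⁻¹ • (H t (h t) - H t₀ (h t₀)))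
      (nhdsWithin t₀ (Set.Icc a b \ {t₀})) (nhds (H t₀ v + w)) :=
  product_rule_equicontinuous_general a b t₀ ht₀ H h v w hstrong hequi hh hdiff hHdiff
end
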